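/- arXiv:math/0609416 — 4 statements merged into one kernel-verified Lean document; each statement's English description precedes it below -/
import Mathlib

section
/- For every infinite language 𝓛 of finite reduced words and every integer k ≥ 0, the set of biinfinite reduced words all of whose factors lie in 𝓛†_k equals the set of biinfinite reduced words all of whose factors lie in 𝓛; i.e., L(𝓛†_k) = L(𝓛). -/
def BiReduced {α : Type*} (inv : α → α) (Z : ℤ → α) : Prop :=
  ∀ i, Z (i + 1) ≠ inv (Z i)

def shiftF {α : Type*} (Z : ℤ → α) : ℤ → α := fun i => Z (i + 1)

def shiftB {α : Type*} (Z : ℤ → α) : ℤ → α := fun i => Z (i - 1)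

def invF {α : Type*} (inv : α → α) (Z : ℤ → α) : ℤ → α := fun i => inv (Z (1 - i))

def IsLamination {α : Type*} [TopologicalSpace α] (inv : α → α)
    (L : Set (ℤ → α)) : Prop :=
  L.Nonempty ∧ (∀ Z ∈ L, BiReduced inv Z) ∧ IsClosed L ∧
  (∀ Z ∈ L, shiftF Z ∈ L) ∧ (∀ Z ∈ L, shiftB Z ∈ L) ∧ (∀ Z ∈ L, invF inv Z ∈ L)

/-- `u` is a finite factor of the biinfinite word `Z`. -/
def FactorOf {α : Type*} (u : List α) (Z : ℤ → α) : Prop :=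
  ∃ i : ℤ, u = (List.range u.length).map fun k => Z (i + k)

/-- The language of all finite factors of elements of `L`. -/
def LangOf {α : Type*} (L : Set (ℤ → α)) : Set (List α) :=
  {u | ∃ Z ∈ L, FactorOf u Z}

/-- Inversion of a finite word: x₁...xₙ ↦ xₙ⁻¹...x₁⁻¹. -/
def wInv {α : Type*} (inv : α → α) (w : List α) : List α := (w.map inv).reverse

/-- A reduced finite word. -/
def Reduced {α : Type*} (inv : α → α) (w : List α) : Prop :=
  w.Chain' fun x y => y ≠ inv x

/-- A laminary language: non-empty set of finite reduced words, symmetric, factorial,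
and bi-extendable. -/
def IsLaminary {α : Type*} (inv : α → α) (𝓛 : Set (List α)) : Prop :=
  𝓛.Nonempty ∧ (∀ w ∈ 𝓛, Reduced inv w) ∧
  (∀ w ∈ 𝓛, wInv inv w ∈ 𝓛) ∧
  (∀ w ∈ 𝓛, ∀ u, u <:+: w → u ∈ 𝓛) ∧
  (∀ u ∈ 𝓛, ∃ w w', w ≠ [] ∧ w' ≠ [] ∧ Reduced inv (w ++ u ++ w') ∧ w ++ u ++ w' ∈ 𝓛)


/-- w†_k : the word w with its first k and last k letters removed. -/
def chop {α : Type*} (k : ℕ) (w : List α) : List α :=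
  (w.drop k).take (w.length - 2 * k)

/-- 𝓛†_k : the factorial closure of the set of chopped words of 𝓛. -/
def chopLang {α : Type*} (𝓛 : Set (List α)) (k : ℕ) : Set (List α) :=
  {u | ∃ w ∈ 𝓛, u <:+: chop k w}

/-- The set L(𝓛) of biinfinite reduced words all of whose finite factors are factors
of elements of 𝓛 ∪ 𝓛⁻¹. -/
def BiOfSym {α : Type*} (inv : α → α) (𝓛 : Set (List α)) : Set (ℤ → α) :=
  {Z | BiReduced inv Z ∧
    ∀ u, FactorOf u Z → ∃ w ∈ 𝓛, u <:+: w ∨ u <:+: wInv inv w}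


section stmt9aux
variable {α : Type*}

private lemma mapcoe9 (f : ℤ → α) (l : List ℕ) :
    List.map f (l : List ℤ) = List.map (fun j : ℕ => f j) l := by
  induction l with
  | nil => rfl
  | cons x xs ih => simp_all

private lemma factor_iff9 (u : List α) (Z : ℤ → α) :
    FactorOf u Z ↔ ∃ i : ℤ, u = (List.range u.length).map fun j : ℕ => Z (i + (j:ℤ)) := by
  unfold FactorOf
  constructor <;> rintro ⟨i, h⟩ <;> refine ⟨i, ?_⟩
  · conv_lhs => rw [h]
    exact mapcoe9 _ _
  · conv_lhs => rw [h]
    exact (mapcoe9 (fun k => Z (i + k)) (List.range u.length)).symm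

private lemma chop_infix9 (k : ℕ) (w : List α) : chop k w <:+: w :=
  (List.take_prefix _ _).isInfix.trans (List.drop_suffix k w).isInfix

private lemma wInv_append9 (inv : α → α) (x y : List α) :
    wInv inv (x ++ y) = wInv inv y ++ wInv inv x := by simp [wInv]

private lemma wInv_wInv9 (inv : α → α) (hinv : Function.Involutive inv) (w : List α) :
    wInv inv (wInv inv w) = w := by
  simp [wInv, List.map_map, hinv.comp_self]

private lemma wInv_length9 (inv : α → α) (w : List α) : (wInv inv w).length = w.length := by
  simp [wInv]

private lemma winv_infix9 {inv : α → α} {u v : List α} (h : u <:+: v) :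
    wInv inv u <:+: wInv inv v := by
  obtain ⟨s, t, rfl⟩ := h
  exact ⟨wInv inv t, wInv inv s, by simp [wInv_append9, List.append_assoc]⟩

private lemma infix_chop9 {k : ℕ} {a u b w : List α} (ha : a.length = k) (hb : b.length = k)
    (h : a ++ u ++ b <:+: w) : u <:+: chop k w := by
  obtain ⟨p, s, hw⟩ := h
  have hw' : w = (p ++ a) ++ (u ++ (b ++ s)) := by rw [← hw]; simp [List.append_assoc]
  subst hw'
  unfold chop
  rw [List.drop_append_of_le_length (by simp [ha])]
  have hlen : ((p ++ a) ++ (u ++ (b ++ s))).length - 2 * k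
      = ((p ++ a).drop k).length + (u.length + s.length) := by
    simp [ha, hb]; omega
  rw [hlen, List.take_append, List.take_append, ← List.append_assoc]
  rw [List.take_of_length_le (by omega), Nat.add_sub_cancel_left,
    List.take_of_length_le (l := u) (by omega)]
  exact List.infix_append _ _ _

private lemma factor_ext9 {Z : ℤ → α} {u : List α} (k : ℕ) (h : FactorOf u Z) :
    ∃ a b : List α, a.length = k ∧ b.length = k ∧ FactorOf (a ++ u ++ b) Z := by
  obtain ⟨i, hu⟩ := (factor_iff9 u Z).mp h
  refine ⟨(List.range k).map (fun j : ℕ => Z (i - k + j)),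
    (List.range k).map (fun j : ℕ => Z (i + u.length + j)), by simp, by simp, ?_⟩
  rw [factor_iff9]
  refine ⟨i - k, ?_⟩
  have hl : ((List.range k).map (fun j : ℕ => Z (i - k + j)) ++ u ++
      (List.range k).map (fun j : ℕ => Z (i + u.length + j))).length
      = k + (u.length + k) := by simp
  rw [hl, List.range_add, List.range_add, List.map_append, List.map_append,
    List.map_append, List.map_map, List.map_map, List.map_map, ← List.append_assoc]
  congr 1
  · congr 1
    conv_lhs => rw [hu]
    refine List.map_congr_left fun j hj => ?_
    simp only [Function.comp_apply]
    congr 1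
    push_cast
    ring
  · refine List.map_congr_left fun j hj => ?_
    simp only [Function.comp_apply]
    congr 1
    push_cast
    ring

end stmt9aux

/-- for every infinite language 𝓛 of finite reduced words and every
k ≥ 0, L(𝓛†_k) = L(𝓛). -/
theorem stmt9 {α : Type*} (inv : α → α)
    (hinv : Function.Involutive inv) (hfp : ∀ x, inv x ≠ x)
    (𝓛 : Set (List α)) (hred : ∀ w ∈ 𝓛, Reduced inv w) (hinf : 𝓛.Infinite)
    (k : ℕ) :
    BiOfSym inv (chopLang 𝓛 k) = BiOfSym inv 𝓛 := by
  ext Z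
  simp only [BiOfSym, Set.mem_setOf_eq]
  constructor
  · rintro ⟨hr, hf⟩
    refine ⟨hr, fun u hu => ?_⟩
    obtain ⟨v, ⟨w, hw, hvw⟩, hc⟩ := hf u hu
    refine ⟨w, hw, ?_⟩
    rcases hc with h | h
    · exact Or.inl (h.trans (hvw.trans (chop_infix9 k w)))
    · exact Or.inr (h.trans ((winv_infix9 hvw).trans (winv_infix9 (chop_infix9 k w))))
  · rintro ⟨hr, hf⟩
    refine ⟨hr, fun u hu => ?_⟩
    obtain ⟨a, b, ha, hb, hu'⟩ := factor_ext9 k hu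
    obtain ⟨w, hw, hc⟩ := hf _ hu'
    refine ⟨chop k w, ⟨w, hw, List.infix_rfl⟩, ?_⟩
    rcases hc with h | h
    · exact Or.inl (infix_chop9 ha hb h)
    · right
      have h2 : wInv inv (a ++ u ++ b) <:+: w := by
        have := winv_infix9 (inv := inv) h
        rwa [wInv_wInv9 inv hinv] at this
      rw [wInv_append9, wInv_append9, ← List.append_assoc] at h2
      have h3 : wInv inv u <:+: chop k w :=
        infix_chop9 (by rw [wInv_length9, hb]) (by rw [wInv_length9, ha]) h2
      have := winv_infix9 (inv := inv) h3
      rwa [wInv_wInv9 inv hinv] at this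
end

section
/- Every minimal symbolic lamination L is a limit of minimal rational laminations: for every n ∈ ℕ there exists a cyclically reduced word v' such that the periodic lamination L(v') has exactly the same factors of length ≤ n as L. Consequently, the closure of the set of rational laminations contains all minimal laminations. -/
/-- The periodic biinfinite word ...www... determined by a nonempty word w. -/
def perF {α : Type*} [Inhabited α] (w : List α) : ℤ → α :=
  fun i => w.getD ((i % (w.length : ℤ)).toNat) default

/-- A cyclically reduced word: its last letter is not the inverse of its first. -/
def CyclRed {α : Type*} (inv : α → α) (w : List α) : Prop :=
  ∀ x ∈ w.head?, ∀ y ∈ w.getLast?, y ≠ inv x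

/-- The minimal rational lamination L(w): the set of biinfinite reduced words all of
whose factors are factors of the periodic word ...www... or of its inverse. -/
def PerLam {α : Type*} [Inhabited α] (inv : α → α) (w : List α) : Set (ℤ → α) :=
  {Z | BiReduced inv Z ∧
    ∀ u, FactorOf u Z → FactorOf u (perF w) ∨ FactorOf (wInv inv u) (perF w)}

/-- A rational lamination: a finite union of minimal rational laminations. -/
def IsRational {α : Type*} [Inhabited α] (inv : α → α) (L : Set (ℤ → α)) : Prop :=
  ∃ S : Finset (List α), S.Nonempty ∧
    (∀ w ∈ S, w ≠ [] ∧ Reduced inv w ∧ CyclRed inv w) ∧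
    L = ⋃ w ∈ S, PerLam inv w

/-- Convergence of laminations: eventual agreement of factor languages at every
bounded length. -/
def ConvergesTo {α : Type*} (Lk : ℕ → Set (ℤ → α)) (L : Set (ℤ → α)) : Prop :=
  ∀ n : ℕ, ∃ K : ℕ, ∀ k ≥ K,
    {u ∈ LangOf (Lk k) | u.length ≤ n} = {u ∈ LangOf L | u.length ≤ n}

namespace Stmt15Aux

variable {α : Type*}

def win (Z : ℤ → α) (s : ℤ) (n : ℕ) : List α :=
  (List.range n).map fun k : ℕ => Z (s + (k : ℤ))

theorem win_length (Z : ℤ → α) (s : ℤ) (n : ℕ) : (win Z s n).length = n := by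
  simp only [win, List.length_map, List.length_range]

theorem coeMap {β : Type*} (n : ℕ) (f : ℤ → β) :
    List.map f (do let a ← List.range n; pure ((a:ℤ))) =
      (List.range n).map (fun k : ℕ => f (k : ℤ)) := by
  have h : ∀ l : List ℕ, (l.flatMap fun a : ℕ => [(a:ℤ)]) =
      l.map (fun a : ℕ => (a:ℤ)) := by
    intro l
    induction l with
    | nil => rfl
    | cons a l ih => simp [List.flatMap_cons, ih]
  show List.map f ((List.range n).flatMap fun a : ℕ => [(a:ℤ)]) = _
  rw [h, List.map_map]; rfl

theorem factorOf_iff {u : List α} {Z : ℤ → α} :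
    FactorOf u Z ↔ ∃ s : ℤ, u = win Z s u.length := by
  unfold FactorOf win
  simp only [coeMap]

theorem win_eq_win_elim {Z W : ℤ → α} {s t : ℤ} {n : ℕ} (h : win Z s n = win W t n)
    {k : ℕ} (hk : k < n) : Z (s + k) = W (t + k) := by
  have h1 := List.getElem_of_eq h (l := win Z s n) (i := k)
    (by simpa only [win_length] using hk)
  simpa only [win, List.getElem_map, List.getElem_range] using h1

theorem win_ext {Z W : ℤ → α} {s t : ℤ} {n : ℕ}
    (h : ∀ k : ℕ, k < n → Z (s + k) = W (t + k)) : win Z s n = win W t n := by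
  apply List.ext_getElem (by simp only [win_length])
  intro k h1 h2
  simp only [win, List.getElem_map, List.getElem_range]
  exact h k (by simpa only [win_length] using h1)

theorem win_mem_langOf {L : Set (ℤ → α)} {Z : ℤ → α} (hZ : Z ∈ L) (s : ℤ) (m : ℕ) :
    win Z s m ∈ LangOf L :=
  ⟨Z, hZ, factorOf_iff.mpr ⟨s, by rw [win_length]⟩⟩

theorem win_shift {Z : ℤ → α} {m s : ℤ} {n : ℕ} :
    win (fun t => Z (t + m)) s n = win Z (s + m) n :=
  win_ext fun k _ => by congr 1; ring

theorem factor_shift {u : List α} {Z : ℤ → α} {m : ℤ} :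
    FactorOf u (fun t => Z (t + m)) ↔ FactorOf u Z := by
  rw [factorOf_iff, factorOf_iff]
  constructor
  · rintro ⟨s, h⟩
    exact ⟨s + m, h.trans win_shift⟩
  · rintro ⟨s, h⟩
    refine ⟨s - m, h.trans ?_⟩
    rw [win_shift (Z := Z) (m := m) (s := s - m), sub_add_cancel]

theorem wInv_length (inv : α → α) (w : List α) : (wInv inv w).length = w.length := by
  simp [wInv]

theorem wInv_wInv {inv : α → α} (hinv : Function.Involutive inv) (w : List α) :
    wInv inv (wInv inv w) = w := by
  simp [wInv, List.map_reverse, List.map_map, hinv.comp_self]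

theorem wInv_win {inv : α → α} {Z : ℤ → α} {s : ℤ} {n : ℕ} :
    wInv inv (win Z s n) = win (invF inv Z) (2 - s - n) n := by
  apply List.ext_getElem
    (by simp only [wInv, List.length_reverse, List.length_map, win_length])
  intro k h1 h2
  have hk : k < n := by simpa only [win_length] using h2
  simp only [wInv, win, invF, List.getElem_reverse, List.getElem_map,
    List.getElem_range, List.length_map, List.length_range]
  congr 2
  omega

theorem factor_invF {inv : α → α} (hinv : Function.Involutive inv) {u : List α}
    {Z : ℤ → α} : FactorOf u (invF inv Z) ↔ FactorOf (wInv inv u) Z := by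
  rw [factorOf_iff, factorOf_iff]
  constructor
  · rintro ⟨s, h⟩
    have h2 : wInv inv (win Z (2 - s - (u.length : ℤ)) u.length) =
        win (invF inv Z) s u.length := by
      rw [wInv_win]; congr 1; ring
    have key : wInv inv u = win Z (2 - s - (u.length:ℤ)) u.length := by
      conv_lhs => rw [h]
      rw [← h2, wInv_wInv hinv]
    refine ⟨2 - s - u.length, ?_⟩
    rw [wInv_length]
    exact key
  · rintro ⟨s, h⟩
    rw [wInv_length] at h
    refine ⟨2 - s - u.length, ?_⟩
    rw [← wInv_win, ← h, wInv_wInv hinv]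

theorem bired_invF {inv : α → α} (hinv : Function.Involutive inv) {Z : ℤ → α}
    (h : BiReduced inv Z) : BiReduced inv (invF inv Z) := by
  intro t heq
  simp only [invF] at heq
  rw [hinv (Z (1 - t))] at heq
  have h2 : (1 : ℤ) - (t + 1) = -t := by ring
  rw [h2] at heq
  exact h (-t) (by rw [show -t + (1:ℤ) = 1 - t by ring]; exact heq.symm)

theorem langOf_wInv {inv : α → α} (hinv : Function.Involutive inv)
    [TopologicalSpace α] {L : Set (ℤ → α)} (hL : IsLamination inv L) {u : List α}
    (hu : u ∈ LangOf L) : wInv inv u ∈ LangOf L := by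
  obtain ⟨Z, hZ, hf⟩ := hu
  exact ⟨invF inv Z, hL.2.2.2.2.2 _ hZ, (factor_invF hinv).2 (by rwa [wInv_wInv hinv])⟩

end Stmt15Aux
namespace Stmt15Aux

variable {α : Type*}

theorem win_getD [Inhabited α] {Z : ℤ → α} {s : ℤ} {n k : ℕ} (hk : k < n) :
    (win Z s n).getD k default = Z (s + k) := by
  rw [List.getD_eq_getElem _ _ (by rw [win_length]; exact hk)]
  simp only [win, List.getElem_map, List.getElem_range]

theorem isOpen_cyl [Inhabited α] [TopologicalSpace α] [DiscreteTopology α]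
    (v : List α) (s : ℤ) : IsOpen {W : ℤ → α | v = win W s v.length} := by
  have heq : {W : ℤ → α | v = win W s v.length} =
      ⋂ k : Fin v.length, {W : ℤ → α | W (s + ((k : ℕ) : ℤ)) = v.getD k default} := by
    ext W
    simp only [Set.mem_setOf_eq, Set.mem_iInter]
    constructor
    · rintro hW ⟨k, hk⟩
      show W (s + (k : ℤ)) = v.getD k default
      rw [hW, win_getD hk]
    · intro hW
      apply List.ext_getElem (by rw [win_length])
      intro k h1 h2
      simp only [win, List.getElem_map, List.getElem_range]
      have h3 := hW ⟨k, h1⟩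
      rw [List.getD_eq_getElem _ _ h1] at h3
      exact h3.symm
  rw [heq]
  refine isOpen_iInter_of_finite fun k => ?_
  have h2 : IsOpen ((fun W : ℤ → α => W (s + ((k : ℕ) : ℤ))) ⁻¹'
      {v.getD (k : ℕ) default}) :=
    (isOpen_discrete _).preimage (continuous_apply _)
  exact h2

theorem isOpen_factorSet [Inhabited α] [TopologicalSpace α] [DiscreteTopology α]
    (u : List α) : IsOpen {Z : ℤ → α | FactorOf u Z} := by
  have h : {Z : ℤ → α | FactorOf u Z} = ⋃ s : ℤ, {Z | u = win Z s u.length} := by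
    ext Z
    simp only [Set.mem_setOf_eq, Set.mem_iUnion, factorOf_iff]
  rw [h]
  exact isOpen_iUnion fun s => isOpen_cyl u s

theorem shift_mem [TopologicalSpace α] {inv : α → α} {L : Set (ℤ → α)}
    (hL : IsLamination inv L) {Z : ℤ → α} (hZ : Z ∈ L) (m : ℤ) :
    (fun t => Z (t + m)) ∈ L := by
  induction m using Int.induction_on with
  | zero => simpa using hZ
  | succ k ih =>
      have h2 := hL.2.2.2.1 _ ih
      have h3 : shiftF (fun t => Z (t + (k : ℤ))) = fun t => Z (t + ((k : ℤ) + 1)) := by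
        funext t; simp only [shiftF]; congr 1; ring
      rwa [h3] at h2
  | pred k ih =>
      have h2 := hL.2.2.2.2.1 _ ih
      have h3 : shiftB (fun t => Z (t + (-(k : ℤ)))) = fun t => Z (t + (-(k : ℤ) - 1)) := by
        funext t; simp only [shiftB]; congr 1; ring
      rwa [h3] at h2

theorem unif [Finite α] [Inhabited α] [TopologicalSpace α] [DiscreteTopology α]
    {inv : α → α} (hinv : Function.Involutive inv) {L : Set (ℤ → α)}
    (hL : IsLamination inv L)
    (hmin : ∀ L' : Set (ℤ → α), IsLamination inv L' → L' ⊆ L → L' = L)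
    (u : List α) (hu : u ∈ LangOf L) :
    ∃ K : ℕ, ∀ Z ∈ L, ∀ t : ℤ, ∃ s : ℤ, t ≤ s ∧ s < t + K ∧
      (u = win Z s u.length ∨ wInv inv u = win Z s u.length) := by
  by_contra hcon
  push_neg at hcon
  choose Zf hZfL tf hf using hcon
  set n := u.length with hn
  set Y : ℕ → ℤ → α := fun k => fun τ => Zf (2*k + n) (τ + (tf (2*k + n) + k)) with hY
  have hYL : ∀ k, Y k ∈ L := fun k => shift_mem hL (hZfL _) _
  have havoid : ∀ (k : ℕ) (s : ℤ), -(k:ℤ) ≤ s → s < k →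
      u ≠ win (Y k) s n ∧ wInv inv u ≠ win (Y k) s n := by
    intro k s h1 h2
    have h3 := hf (2*k+n) (s + (tf (2*k+n) + k)) (by omega) (by push_cast; omega)
    have hw : win (Y k) s n = win (Zf (2*k+n)) (s + (tf (2*k+n) + k)) n := win_shift
    rw [hw]
    exact h3
  have hLc : IsCompact L := hL.2.2.1.isCompact
  haveI : Filter.NeBot (Filter.map Y Filter.atTop) := Filter.map_neBot
  have hle : Filter.map Y Filter.atTop ≤ Filter.principal L :=
    Filter.le_principal_iff.mpr (Filter.mem_map.mpr (Filter.Eventually.of_forall hYL))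
  obtain ⟨a, haL, hcl⟩ := hLc.exists_clusterPt hle
  have hav : ∀ v : List α, v.length = n →
      (∀ (k : ℕ) (s : ℤ), -(k:ℤ) ≤ s → s < k → v ≠ win (Y k) s n) →
      ∀ s : ℤ, v ≠ win a s n := by
    intro v hv hvk s hs
    have hopen : IsOpen {W : ℤ → α | v = win W s v.length} := isOpen_cyl v s
    rw [hv] at hopen
    have hmem : {W : ℤ → α | v = win W s n} ∈ nhds a := hopen.mem_nhds hs
    have hV : Y '' Set.Ici (s.natAbs + n + 1) ∈ Filter.map Y Filter.atTop :=
      Filter.mem_map.mpr (Filter.mem_of_superset (Filter.mem_atTop _)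
        (fun k hk => Set.mem_image_of_mem _ hk))
    obtain ⟨W, hW1, hW2⟩ := (clusterPt_iff_nonempty.mp hcl) hmem hV
    obtain ⟨k, hk, rfl⟩ := hW2
    have hk' : s.natAbs + n + 1 ≤ k := hk
    exact hvk k s (by omega) (by omega) hW1
  have h1 : ∀ s, u ≠ win a s n :=
    hav u hn.symm (fun k s hk1 hk2 => (havoid k s hk1 hk2).1)
  have h2 : ∀ s, wInv inv u ≠ win a s n :=
    hav _ ((wInv_length inv u).trans hn.symm) (fun k s hk1 hk2 => (havoid k s hk1 hk2).2)
  set L' : Set (ℤ → α) :=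
    (L ∩ {W : ℤ → α | FactorOf u W}ᶜ) ∩ {W : ℤ → α | FactorOf (wInv inv u) W}ᶜ with hL'def
  have haL' : a ∈ L' := by
    refine ⟨⟨haL, fun hf2 => ?_⟩, fun hf2 => ?_⟩
    · obtain ⟨s, hs⟩ := factorOf_iff.mp hf2
      rw [← hn] at hs
      exact h1 s hs
    · obtain ⟨s, hs⟩ := factorOf_iff.mp hf2
      rw [wInv_length, ← hn] at hs
      exact h2 s hs
  have hlam : IsLamination inv L' := by
    refine ⟨⟨a, haL'⟩, fun Z hZ => hL.2.1 Z hZ.1.1, ?_, ?_, ?_, ?_⟩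
    · exact (hL.2.2.1.inter (isOpen_factorSet u).isClosed_compl).inter
        (isOpen_factorSet _).isClosed_compl
    · rintro Z ⟨⟨hZ1, hZ2⟩, hZ3⟩
      exact ⟨⟨hL.2.2.2.1 Z hZ1, fun hf2 => hZ2 ((factor_shift (m := 1)).mp hf2)⟩,
        fun hf2 => hZ3 ((factor_shift (m := 1)).mp hf2)⟩
    · rintro Z ⟨⟨hZ1, hZ2⟩, hZ3⟩
      exact ⟨⟨hL.2.2.2.2.1 Z hZ1, fun hf2 => hZ2 ((factor_shift (m := -1)).mp hf2)⟩,
        fun hf2 => hZ3 ((factor_shift (m := -1)).mp hf2)⟩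
    · rintro Z ⟨⟨hZ1, hZ2⟩, hZ3⟩
      refine ⟨⟨hL.2.2.2.2.2 Z hZ1, fun hf2 => ?_⟩, fun hf2 => ?_⟩
      · exact hZ3 ((factor_invF hinv).mp hf2)
      · have := (factor_invF hinv).mp hf2
        rw [wInv_wInv hinv] at this
        exact hZ2 this
  have hE : L' = L := hmin L' hlam (fun W hW => hW.1.1)
  obtain ⟨Z, hZ, hfZ⟩ := hu
  rw [← hE] at hZ
  exact hZ.1.2 hfZ

end Stmt15Aux
namespace Stmt15Aux

variable {α : Type*}

theorem perF_win [Inhabited α] (Z : ℤ → α) (i : ℤ) {p : ℕ} (hp : 0 < p) (t : ℤ) :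
    perF (win Z i p) t = Z (i + t % p) := by
  have h0 : 0 ≤ t % (p:ℤ) := Int.emod_nonneg t (by exact_mod_cast hp.ne')
  have h1 : t % (p:ℤ) < p := Int.emod_lt_of_pos t (by exact_mod_cast hp)
  show (win Z i p).getD ((t % ((win Z i p).length : ℤ)).toNat) default = Z (i + t % p)
  rw [win_length]
  rw [List.getD_eq_getElem _ _ (by rw [win_length]; omega)]
  simp only [win, List.getElem_map, List.getElem_range]
  congr 1
  omega

theorem periodic_lemma (Z : ℤ → α) (i : ℤ) (p N : ℕ) (hp : 0 < p)
    (hper : ∀ k : ℕ, k < N → Z (i + k + p) = Z (i + k)) :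
    ∀ x : ℕ, x < N + p → Z (i + (x:ℤ) % p) = Z (i + x) := by
  intro x
  induction x using Nat.strong_induction_on with
  | _ x ih =>
    intro hx
    by_cases h : x < p
    · rw [Int.emod_eq_of_lt (by positivity) (by exact_mod_cast h)]
    · have e1 : (x:ℤ) % p = (((x - p : ℕ)):ℤ) % p := by
        have hc : (((x - p:ℕ)):ℤ) = (x:ℤ) - p := by omega
        rw [hc, show (x:ℤ) - p = (x:ℤ) + p * (-1) by ring, Int.add_mul_emod_self_left]
      have e2 := hper (x - p) (by omega)
      rw [e1, ih (x - p) (by omega) (by omega), ← e2]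
      congr 1
      omega

theorem per_win_eq [Inhabited α] (Z : ℤ → α) (i : ℤ) (p N : ℕ) (hp : 0 < p)
    (hper : ∀ k : ℕ, k < N → Z (i + k + p) = Z (i + k)) (t : ℤ) (k : ℕ) (hk : k < N) :
    perF (win Z i p) (t + k) = Z ((i + t % p) + k) := by
  rw [perF_win Z i hp]
  have h0 : 0 ≤ t % (p:ℤ) := Int.emod_nonneg _ (by exact_mod_cast hp.ne')
  have h1 : t % (p:ℤ) < p := Int.emod_lt_of_pos _ (by exact_mod_cast hp)
  have e1 : (t + k) % p = (((t % p).toNat + k : ℕ):ℤ) % p := by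
    have hc : (((t % (p:ℤ)).toNat + k : ℕ):ℤ) = t % p + k := by push_cast; omega
    rw [hc, Int.emod_add_emod]
  rw [e1, periodic_lemma Z i p N hp hper _ (by omega)]
  congr 1
  omega

theorem key [Finite α] [Inhabited α] [TopologicalSpace α] [DiscreteTopology α]
    {inv : α → α} (hinv : Function.Involutive inv)
    {L : Set (ℤ → α)} (hL : IsLamination inv L)
    (hmin : ∀ L' : Set (ℤ → α), IsLamination inv L' → L' ⊆ L → L' = L)
    (N : ℕ) (hN : 2 ≤ N) :
    ∃ v' : List α, v' ≠ [] ∧ Reduced inv v' ∧ CyclRed inv v' ∧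
      {u ∈ LangOf (PerLam inv v') | u.length ≤ N} = {u ∈ LangOf L | u.length ≤ N} := by
  classical
  have hFin : {v : List α | v ∈ LangOf L ∧ v.length = N}.Finite := by
    apply Set.Finite.subset (Set.finite_range (fun f : Fin N → α => List.ofFn f))
    rintro v ⟨_, hlen⟩
    refine ⟨fun k => v.get (Fin.cast hlen.symm k), ?_⟩
    apply List.ext_getElem (by simp [hlen])
    intro k h1 h2
    simp [List.getElem_ofFn, List.get_eq_getElem]
  have hU := fun v (hv : v ∈ LangOf L) => unif hinv hL hmin v hv
  choose KF hKF using hU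
  set K : ℕ := hFin.toFinset.sup (fun v => if h : v ∈ LangOf L then KF v h else 0)
    with hKdef
  have hKspec : ∀ v, v ∈ LangOf L → v.length = N → ∀ Z ∈ L, ∀ t : ℤ, ∃ s : ℤ,
      t ≤ s ∧ s < t + K ∧ (v = win Z s N ∨ wInv inv v = win Z s N) := by
    intro v hv hlen Z hZ t
    obtain ⟨s, h1, h2, h3⟩ := hKF v hv Z hZ t
    have hle : KF v hv ≤ K := by
      have h4 := Finset.le_sup (f := fun v => if h : v ∈ LangOf L then KF v h else 0)
        (hFin.mem_toFinset.mpr ⟨hv, hlen⟩)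
      have h5 : (if h : v ∈ LangOf L then KF v h else 0) ≤ K := h4
      rwa [dif_pos hv] at h5
    refine ⟨s, h1, by omega, by rwa [hlen] at h3⟩
  obtain ⟨Z0, hZ0⟩ := hL.1
  obtain ⟨c, hc⟩ :=
    Finite.exists_infinite_fiber (fun m : ℕ => fun k : Fin N => Z0 ((m:ℤ) + (k:ℕ)))
  have hcinf := Set.infinite_coe_iff.mp hc
  obtain ⟨i, hi⟩ := hcinf.nonempty
  obtain ⟨j, hj, hij⟩ := hcinf.exists_gt (i + K)
  have hblock : ∀ k : ℕ, k < N → Z0 ((i:ℤ) + k) = Z0 ((j:ℤ) + k) := by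
    intro k hk
    have h1 : (fun k : Fin N => Z0 ((i:ℤ) + (k:ℕ))) = c := hi
    have h2 : (fun k : Fin N => Z0 ((j:ℤ) + (k:ℕ))) = c := hj
    have h3 := congrFun (h1.trans h2.symm) ⟨k, hk⟩
    simpa using h3
  set p : ℕ := j - i with hpdef
  have hp0 : 0 < p := by omega
  have hpK : K < p := by omega
  have hper : ∀ k : ℕ, k < N → Z0 ((i:ℤ) + k + p) = Z0 ((i:ℤ) + k) := by
    intro k hk
    have h2 : (i:ℤ) + k + p = (j:ℤ) + k := by omega
    rw [h2]
    exact (hblock k hk).symm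
  set v' : List α := win Z0 (i:ℤ) p with hv'def
  have hwinper : ∀ (t : ℤ) (k : ℕ), k < N →
      perF v' (t + k) = Z0 (((i:ℤ) + t % p) + k) :=
    fun t k hk => per_win_eq Z0 i p N hp0 hper t k hk
  have hwin : ∀ (t : ℤ) (m : ℕ), m ≤ N →
      win (perF v') t m = win Z0 ((i:ℤ) + t % p) m := by
    intro t m hm
    exact win_ext fun k hk => hwinper t k (lt_of_lt_of_le hk hm)
  have hwin0 : ∀ (q : ℤ), 0 ≤ q → q < p → ∀ m, m ≤ N →
      win (perF v') q m = win Z0 ((i:ℤ) + q) m := by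
    intro q h0 h1 m hm
    rw [hwin q m hm, Int.emod_eq_of_lt h0 h1]
  have hbr0 : BiReduced inv Z0 := hL.2.1 Z0 hZ0
  have hbrper : BiReduced inv (perF v') := by
    intro t
    have e0 : perF v' t = Z0 ((i:ℤ) + t % p) := by
      simpa using hwinper t 0 (by omega)
    have e1 : perF v' (t + 1) = Z0 ((i:ℤ) + t % p + 1) := by
      simpa using hwinper t 1 (by omega)
    rw [e1, e0]
    exact hbr0 _
  have hlen' : v'.length = p := win_length _ _ _
  have hne : v' ≠ [] := by
    intro h
    rw [h] at hlen'
    simp at hlen'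
    omega
  have hred : Reduced inv v' := by
    rw [Reduced, List.Chain', List.isChain_iff_getElem]
    intro k hk
    rw [hlen'] at hk
    simp only [hv'def, win, List.get_eq_getElem, List.getElem_map, List.getElem_range]
    intro heq
    have h2 : (i:ℤ) + ((k:ℕ) + 1 : ℕ) = (i:ℤ) + k + 1 := by push_cast; ring
    rw [h2] at heq
    exact hbr0 ((i:ℤ) + k) heq
  have hcyc : CyclRed inv v' := by
    intro x hx y hy
    have hlt0 : 0 < v'.length := by omega
    have hltp : v'.length - 1 < v'.length := by omega
    rw [List.head?_eq_getElem?, List.getElem?_eq_getElem hlt0] at hx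
    rw [List.getLast?_eq_getElem?, List.getElem?_eq_getElem hltp] at hy
    have hx' : v'[0]'hlt0 = x := Option.mem_some_iff.mp hx
    have hy' : v'[v'.length - 1]'hltp = y := Option.mem_some_iff.mp hy
    have hx2 : x = Z0 ((i:ℤ) + ((0:ℕ):ℤ)) := by
      rw [← hx']
      simp only [hv'def, win, List.getElem_map, List.getElem_range]
    have hy2 : y = Z0 ((i:ℤ) + ((p - 1 : ℕ):ℤ)) := by
      rw [← hy']
      simp only [hlen']
      simp only [hv'def, win, List.getElem_map, List.getElem_range]
    have hip : Z0 ((i:ℤ) + p) = Z0 (i:ℤ) := by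
      have h2 := hper 0 (by omega)
      simpa using h2
    intro heq
    have hb := hbr0 ((i:ℤ) + ((p - 1 : ℕ):ℤ))
    apply hb
    have harg : (i:ℤ) + ((p - 1 : ℕ):ℤ) + 1 = (i:ℤ) + p := by omega
    rw [harg, hip]
    rw [hx2] at heq
    rw [hy2] at heq
    have h7 : Z0 ((i:ℤ) + ((0:ℕ):ℤ)) = Z0 (i:ℤ) := by norm_num
    rw [h7] at heq
    rw [heq, hinv]
  have hperP : perF v' ∈ PerLam inv v' := ⟨hbrper, fun w hw => Or.inl hw⟩
  have hinvP : invF inv (perF v') ∈ PerLam inv v' :=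
    ⟨bired_invF hinv hbrper, fun w hw => Or.inr ((factor_invF hinv).mp hw)⟩
  refine ⟨v', hne, hred, hcyc, ?_⟩
  ext w
  simp only [Set.mem_setOf_eq]
  constructor
  · rintro ⟨hw, hwlen⟩
    refine ⟨?_, hwlen⟩
    obtain ⟨ZZ, hZZ, hfZZ⟩ := hw
    rcases hZZ.2 w hfZZ with hcase | hcase
    · obtain ⟨t, ht⟩ := factorOf_iff.mp hcase
      have h2 : w = win Z0 ((i:ℤ) + t % p) w.length := ht.trans (hwin t w.length hwlen)
      rw [h2]
      exact win_mem_langOf hZ0 _ _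
    · obtain ⟨t, ht⟩ := factorOf_iff.mp hcase
      rw [wInv_length] at ht
      have h2 : wInv inv w ∈ LangOf L := by
        have h3 : wInv inv w = win Z0 ((i:ℤ) + t % p) w.length :=
          ht.trans (hwin t w.length hwlen)
        rw [h3]
        exact win_mem_langOf hZ0 _ _
      have h4 := langOf_wInv hinv hL h2
      rwa [wInv_wInv hinv] at h4
  · rintro ⟨hw, hwlen⟩
    refine ⟨?_, hwlen⟩
    obtain ⟨ZZ, hZZ, hfZZ⟩ := hw
    obtain ⟨t, ht⟩ := factorOf_iff.mp hfZZ
    have hwN : win ZZ t N ∈ LangOf L := win_mem_langOf hZZ t N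
    obtain ⟨s, hs1, hs2, hcase⟩ :=
      hKspec (win ZZ t N) hwN (win_length _ _ _) Z0 hZ0 (i:ℤ)
    have hq0 : (0:ℤ) ≤ s - i := by omega
    have hq1 : s - i < (p:ℤ) := by omega
    have hqwin : win (perF v') (s - (i:ℤ)) N = win Z0 s N := by
      rw [hwin0 (s - i) hq0 hq1 N le_rfl]
      congr 1
      omega
    rcases hcase with hcase | hcase
    · have hagree : win ZZ t w.length = win (perF v') (s - (i:ℤ)) w.length :=
        win_ext fun k hk =>
          win_eq_win_elim (hcase.trans hqwin.symm) (lt_of_lt_of_le hk hwlen)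
      exact ⟨perF v', hperP, factorOf_iff.mpr ⟨s - i, ht.trans hagree⟩⟩
    · have h4 : wInv inv (win ZZ t N) = win (perF v') (s - (i:ℤ)) N :=
        hcase.trans hqwin.symm
      have h5 := congrArg (wInv inv) h4
      rw [wInv_wInv hinv] at h5
      have h6 : win ZZ t N = win (invF inv (perF v')) (2 - (s - (i:ℤ)) - N) N := by
        rw [h5, wInv_win]
      have hagree : win ZZ t w.length =
          win (invF inv (perF v')) (2 - (s - (i:ℤ)) - N) w.length :=
        win_ext fun k hk => win_eq_win_elim h6 (lt_of_lt_of_le hk hwlen)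
      exact ⟨invF inv (perF v'), hinvP, factorOf_iff.mpr ⟨_, ht.trans hagree⟩⟩

end Stmt15Aux
namespace Stmt15Aux

theorem sep_restrict {α : Type*} {A B : Set (List α)} {N n : ℕ} (hn : n ≤ N)
    (h : {u ∈ A | u.length ≤ N} = {u ∈ B | u.length ≤ N}) :
    {u ∈ A | u.length ≤ n} = {u ∈ B | u.length ≤ n} := by
  ext u
  simp only [Set.mem_setOf_eq]
  constructor
  · rintro ⟨hu, hl⟩
    have hmem : u ∈ {u ∈ A | u.length ≤ N} := ⟨hu, hl.trans hn⟩
    rw [h] at hmem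
    exact ⟨hmem.1, hl⟩
  · rintro ⟨hu, hl⟩
    have hmem : u ∈ {u ∈ B | u.length ≤ N} := ⟨hu, hl.trans hn⟩
    rw [← h] at hmem
    exact ⟨hmem.1, hl⟩

end Stmt15Aux
/-- every minimal symbolic lamination L is a limit of minimal rational
laminations: for each n there is a cyclically reduced v' with L(v') having exactly the
same factors of length ≤ n as L; consequently some sequence of rational laminations
converges to L. -/
theorem stmt15 {α : Type*} [Fintype α] [DecidableEq α] [Inhabited α]
    [TopologicalSpace α] [DiscreteTopology α]
    (inv : α → α) (hinv : Function.Involutive inv) (hfp : ∀ x, inv x ≠ x)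
    (L : Set (ℤ → α)) (hL : IsLamination inv L)
    (hmin : ∀ L' : Set (ℤ → α), IsLamination inv L' → L' ⊆ L → L' = L) :
    (∀ n : ℕ, ∃ v' : List α, v' ≠ [] ∧ Reduced inv v' ∧ CyclRed inv v' ∧
      {u ∈ LangOf (PerLam inv v') | u.length ≤ n} = {u ∈ LangOf L | u.length ≤ n}) ∧
    ∃ Lk : ℕ → Set (ℤ → α), (∀ k, IsRational inv (Lk k)) ∧ ConvergesTo Lk L := by
  have part1 : ∀ n : ℕ, ∃ v' : List α, v' ≠ [] ∧ Reduced inv v' ∧ CyclRed inv v' ∧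
      {u ∈ LangOf (PerLam inv v') | u.length ≤ n} = {u ∈ LangOf L | u.length ≤ n} := by
    intro n
    obtain ⟨v', h1, h2, h3, h4⟩ :=
      Stmt15Aux.key hinv hL hmin (max n 2) (le_max_right _ _)
    exact ⟨v', h1, h2, h3, Stmt15Aux.sep_restrict (le_max_left _ _) h4⟩
  refine ⟨part1, ?_⟩
  choose v hv1 hv2 hv3 hv4 using part1
  refine ⟨fun k => PerLam inv (v k),
    fun k => ⟨{v k}, Finset.singleton_nonempty _, ?_, ?_⟩, ?_⟩
  · intro w hw
    rw [Finset.mem_singleton] at hw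
    subst hw
    exact ⟨hv1 k, hv2 k, hv3 k⟩
  · simp
  · intro n
    exact ⟨n, fun k hk => Stmt15Aux.sep_restrict hk (hv4 k)⟩
end

section
/- Let L be a minimal non-orientable symbolic lamination with laminary language 𝓛, and let u ∈ 𝓛 have length n. Suppose K is a bounded-gap constant for u (every word of 𝓛 of length > K contains u or u⁻¹) and, by non-orientability, assume every word of 𝓛 of length > K contains both u and u⁻¹ as factors. Let v = w₁w₂w₃ ∈ 𝓛 with |w₁| = |w₂| = |w₃| = K. Write w₁ = w₁'u w₁'' and w₃ = w₃'u w₃'' as reduced products. Then v' = u w₁'' w₂ w₃' is cyclically reduced, and every factor of length n of the periodic biinfinite word ...v'v'v'... is a factor of some element of 𝓛. -/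
private lemma flatMap_singleton_map' {α β : Type*} (f : α → β) (l : List α) :
    (l.flatMap fun a => [f a]) = l.map f := by
  induction l with
  | nil => rfl
  | cons b t ih => simp only [List.flatMap_cons, List.map_cons, ih, List.singleton_append]

private lemma factorOf_getElem' {α : Type*} {w : List α} {Z : ℤ → α} (h : FactorOf w Z) :
    ∃ i : ℤ, ∀ (k : ℕ) (hk : k < w.length), w[k] = Z (i + k) := by
  obtain ⟨i, hi⟩ := h
  simp only [List.pure_def, List.bind_eq_flatMap, flatMap_singleton_map', List.map_map] at hi
  refine ⟨i, fun k hk => ?_⟩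
  rw [List.getElem_of_eq hi hk]
  simp

private lemma factor_reduced' {α : Type*} (inv : α → α) {Z : ℤ → α} (hZ : BiReduced inv Z)
    {w : List α} (hw : FactorOf w Z) : Reduced inv w := by
  obtain ⟨i, hkey⟩ := factorOf_getElem' hw
  rw [Reduced, List.Chain', List.isChain_iff_getElem]
  intro k hk
  rw [hkey k (by omega), hkey (k+1) (by omega)]
  have harg : i + ((k : ℤ) + 1) = (i + k) + 1 := by ring
  push_cast
  rw [harg]
  exact hZ (i + k)

private lemma head?_append_of_ne_nil' {α : Type*} (l t : List α) (h : l ≠ []) :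
    (l ++ t).head? = l.head? := by
  cases l <;> simp_all

private lemma per_factor_infix' {α : Type*} [Inhabited α] (u r f : List α) (hu : u ≠ [])
    (hf : f.length = u.length) (hper : FactorOf f (perF (u ++ r))) :
    f <:+: (u ++ r) ++ u := by
  obtain ⟨i, hkey⟩ := factorOf_getElem' hper
  have hM : (u ++ r).length = u.length + r.length := by simp
  have hu0 : 0 < u.length := List.length_pos_iff.mpr hu
  have hM0 : 0 < (u ++ r).length := by omega
  obtain ⟨j, hjeq, hjlt⟩ : ∃ j : ℕ, i % ((u ++ r).length : ℤ) = (j : ℤ) ∧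
      j < (u ++ r).length := by
    have h0 : 0 ≤ i % ((u ++ r).length : ℤ) :=
      Int.emod_nonneg i (by exact_mod_cast hM0.ne')
    refine ⟨(i % ((u ++ r).length : ℤ)).toNat, (Int.toNat_of_nonneg h0).symm, ?_⟩
    have := Int.emod_lt_of_pos i (show (0:ℤ) < ((u ++ r).length : ℤ) by exact_mod_cast hM0)
    omega
  have key : f = (((u ++ r) ++ u).drop j).take u.length := by
    apply List.ext_getElem
    · simp [hf]
      omega
    · intro k hk1 hk2
      have hkn : k < u.length := by rw [hf] at hk1; exact hk1
      rw [List.getElem_take, List.getElem_drop, hkey k hk1]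
      have hmodeq : i % ((u ++ r).length : ℤ) = (j : ℤ) % ((u ++ r).length : ℤ) := by
        rw [hjeq, Int.emod_eq_of_lt (Int.natCast_nonneg j) (by exact_mod_cast hjlt)]
      have h1 : (i + (k : ℤ)) % ((u ++ r).length : ℤ) =
          ((j : ℤ) + (k : ℤ)) % ((u ++ r).length : ℤ) :=
        Int.ModEq.add_right _ hmodeq
      have hmodN : ((i + (k : ℤ)) % ((u ++ r).length : ℤ)).toNat
          = (j + k) % (u ++ r).length := by
        rw [h1, ← Nat.cast_add, ← Int.natCast_mod, Int.toNat_natCast]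
      show perF (u ++ r) (i + (k : ℤ)) = _
      rw [perF, hmodN]
      rcases Nat.lt_or_ge (j + k) (u ++ r).length with hlt | hge
      · rw [Nat.mod_eq_of_lt hlt]
        calc (u ++ r).getD (j + k) default
            = (u ++ r)[j + k]'hlt := List.getD_eq_getElem _ _ hlt
          _ = ((u ++ r) ++ u)[j + k]'(by simp; omega) :=
              (List.getElem_append_left hlt).symm
      · have hsub : (j + k) % (u ++ r).length = j + k - (u ++ r).length := by
          rw [Nat.mod_eq_sub_mod hge, Nat.mod_eq_of_lt (by omega)]
        have hidx : j + k - (u ++ r).length < u.length := by omega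
        rw [hsub]
        calc (u ++ r).getD (j + k - (u ++ r).length) default
            = (u ++ r)[j + k - (u ++ r).length]'(by omega) :=
              List.getD_eq_getElem _ _ (by omega)
          _ = u[j + k - (u ++ r).length]'hidx := List.getElem_append_left hidx
          _ = ((u ++ r) ++ u)[j + k]'(by simp; omega) :=
              (List.getElem_append_right hge).symm
  rw [key]
  exact ((List.take_prefix _ _).isInfix.trans (List.drop_suffix j _).isInfix)

/-- in a minimal non-orientable lamination L with language 𝓛, given
u ∈ 𝓛 of length n, a bounded-gap constant K such that every word of 𝓛 of length > K
contains both u and u⁻¹, and v = w₁w₂w₃ ∈ 𝓛 with |w₁| = |w₂| = |w₃| = K,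
w₁ = w₁'uw₁'', w₃ = w₃'uw₃'', the word v' = u w₁'' w₂ w₃' is cyclically reduced and
every factor of length n of the periodic word ...v'v'v'... is a factor of an element
of 𝓛. -/
theorem stmt16 {α : Type*} [Fintype α] [Inhabited α]
    [TopologicalSpace α] [DiscreteTopology α]
    (inv : α → α) (hinv : Function.Involutive inv) (hfp : ∀ x, inv x ≠ x)
    (L : Set (ℤ → α)) (hL : IsLamination inv L)
    (hmin : ∀ L' : Set (ℤ → α), IsLamination inv L' → L' ⊆ L → L' = L)
    (𝓛 : Set (List α)) (h𝓛 : 𝓛 = LangOf L)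
    (u : List α) (hu : u ∈ 𝓛) (n : ℕ) (hn : 0 < n) (hun : u.length = n)
    (K : ℕ)
    (hgap : ∀ w ∈ 𝓛, K < w.length → (u <:+: w ∧ wInv inv u <:+: w))
    (w₁ w₂ w₃ : List α) (hv : w₁ ++ w₂ ++ w₃ ∈ 𝓛)
    (h₁ : w₁.length = K) (h₂ : w₂.length = K) (h₃ : w₃.length = K)
    (w₁' w₁'' w₃' w₃'' : List α)
    (hw₁ : w₁ = w₁' ++ u ++ w₁'') (hw₃ : w₃ = w₃' ++ u ++ w₃'') :
    Reduced inv (u ++ w₁'' ++ w₂ ++ w₃') ∧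
    CyclRed inv (u ++ w₁'' ++ w₂ ++ w₃') ∧
    ∀ f : List α, f.length = n → FactorOf f (perF (u ++ w₁'' ++ w₂ ++ w₃')) →
      ∃ w ∈ 𝓛, f <:+: w := by
  subst h𝓛
  have hu0 : u ≠ [] := by intro h; rw [h] at hun; simp at hun; omega
  have hv'alt : u ++ w₁'' ++ w₂ ++ w₃' = u ++ (w₁'' ++ w₂ ++ w₃') := by
    simp [List.append_assoc]
  have hinf : (u ++ w₁'' ++ w₂ ++ w₃') ++ u <:+: w₁ ++ w₂ ++ w₃ := by
    refine ⟨w₁', w₃'', ?_⟩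
    rw [hw₁, hw₃]
    simp [List.append_assoc]
  obtain ⟨Z, hZL, hZf⟩ := hv
  have hred_v : Reduced inv (w₁ ++ w₂ ++ w₃) := factor_reduced' inv (hL.2.1 Z hZL) hZf
  have hred : Reduced inv ((u ++ w₁'' ++ w₂ ++ w₃') ++ u) := List.IsChain.infix hred_v hinf
  have hredv' : Reduced inv (u ++ w₁'' ++ w₂ ++ w₃') :=
    List.IsChain.infix hred (List.prefix_append _ u).isInfix
  have hjunc : ∀ x ∈ (u ++ w₁'' ++ w₂ ++ w₃').getLast?, ∀ y ∈ u.head?, y ≠ inv x :=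
    (List.isChain_append.mp hred).2.2
  have hhead : (u ++ w₁'' ++ w₂ ++ w₃').head? = u.head? := by
    rw [hv'alt]; exact head?_append_of_ne_nil' u _ hu0
  have hcyc : CyclRed inv (u ++ w₁'' ++ w₂ ++ w₃') := by
    intro x hx y hy
    rw [hhead] at hx
    have h1 : x ≠ inv y := hjunc y hy x hx
    intro h
    exact h1 (by rw [h, hinv])
  refine ⟨hredv', hcyc, ?_⟩
  intro f hf hfper
  rw [hv'alt] at hfper
  have hff : f <:+: (u ++ (w₁'' ++ w₂ ++ w₃')) ++ u :=
    per_factor_infix' u _ f hu0 (by rw [hf, hun]) hfper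
  rw [← hv'alt] at hff
  exact ⟨w₁ ++ w₂ ++ w₃, ⟨Z, hZL, hZf⟩, hff.trans hinf⟩
end

section
/- Let α be an automorphism of the free group F_N and A a basis of F_N such that there is a constant C ≥ 0 with: for all u, v ∈ F_N with |u|_A + |v|_A = |uv|_A, one has |α(u)|_A + |α(v)|_A − |α(uv)|_A ≤ 2C (bounded cancellation). Then every element w ∈ F_N that is cyclically reduced with respect to A is 'almost cyclically reduced' after applying the basis change: if the reduced word for w over the new basis B = α⁻¹(A) is y₁⋯y_r y_{r+1}⋯y_n y_r⁻¹⋯y₁⁻¹ with y_{r+1} ≠ y_r⁻¹ and y_n ≠ y_r, then r ≤ C. (Proof hint: apply the bounded cancellation bound to the reduced product decomposition of w².) -/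
/-- if α satisfies a bounded cancellation bound C on the basis A, then
every w ∈ F_N cyclically reduced w.r.t. A is almost cyclically reduced w.r.t. the
basis B = α⁻¹(A): in any decomposition of α(w) as a reduced product c·m·c⁻¹ with m
cyclically reduced, the conjugating part has length at most C. -/
theorem stmt17 {β : Type*} [Fintype β] [DecidableEq β]
    (e : FreeGroup β ≃* FreeGroup β) (C : ℕ)
    (hC : ∀ u v : FreeGroup β,
      FreeGroup.norm u + FreeGroup.norm v = FreeGroup.norm (u * v) →
      FreeGroup.norm (e u) + FreeGroup.norm (e v) ≤
        FreeGroup.norm (e (u * v)) + 2 * C)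
    (w : FreeGroup β)
    (hw : FreeGroup.norm (w * w) = 2 * FreeGroup.norm w)
    (c m : FreeGroup β)
    (hdecomp : e w = c * m * c⁻¹)
    (hred : FreeGroup.norm (e w) = 2 * FreeGroup.norm c + FreeGroup.norm m)
    (hmcyc : FreeGroup.norm (m * m) = 2 * FreeGroup.norm m) :
    FreeGroup.norm c ≤ C := by
  have h1 := hC w w (by rw [hw, two_mul])
  have h2 : e (w * w) = c * (m * m) * c⁻¹ := by
    rw [map_mul, hdecomp]; group
  have h3 : FreeGroup.norm (e (w * w)) ≤
      FreeGroup.norm c + FreeGroup.norm (m * m) + FreeGroup.norm c := by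
    calc FreeGroup.norm (e (w * w)) = FreeGroup.norm (c * (m * m) * c⁻¹) := by rw [h2]
    _ ≤ FreeGroup.norm (c * (m * m)) + FreeGroup.norm c⁻¹ := FreeGroup.norm_mul_le _ _
    _ ≤ FreeGroup.norm c + FreeGroup.norm (m * m) + FreeGroup.norm c :=
        by rw [FreeGroup.norm_inv_eq]; exact Nat.add_le_add_right (FreeGroup.norm_mul_le c (m * m)) _
  rw [hmcyc] at h3
  rw [hred] at h1
  omega
end
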